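/- Existence of centroid-respecting radii for the circular covering: There exists a universal constant Θ > 1 such that for every even integer m ≥ 6 and every ρ > 0, there exist radii 0 = r₀ ≤ r₁ ≤ r₂ ≤ … ≤ r_{m/2+1} satisfying r_j ≤ 2ρ·sin(jπ/m) ≤ r_{j+1} for all j ∈ {1,…,m/2}, such that for every j ∈ {1,…,m/2} and ℓ ∈ {1,…,m} with 2ρ·sin(jπ/m) ≤ Θρ, the point q_{jℓ} = 2ρ·sin(jπ/m)·e^{i(j+2ℓ)π/m} ∈ ℂ is the centroid of the sector I_{jℓ} = {r·e^{iθ} : r_j < r < r_{j+1}, |θ − (j+2ℓ)π/m| < π/m} ⊂ ℂ, i.e. (∫_{I_{jℓ}} z dA(z)) / |I_{jℓ}| = q_{jℓ}. -/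

import Mathlib

/-!
The centroid of the annular sector `{r e^{iθ} : a < r < b, |θ - φ| < α}` is
`c(α) (a² + ab + b²) / (a + b) · e^{iφ}` with `c(α) = 2 sin α / (3α) < 2/3`, by integrating in
polar coordinates. Put `s_j = 2ρ sin(jπ/m)` and `c = c(π/m)`. The radii are built recursively:
while `s_j ≤ Θρ`, `r_{j+1}` is the root `b ≥ s_j` of `c (a² + ab + b²) = s_j (a + b)` with
`a = r_j`, which puts the centroid of the `j`-th sector at distance `s_j`; afterwards
`r_{j+1} = s_j`. The invariant `s_{j-1} ≤ r_j ≤ s_j` propagates: the root stays below `s_{j+1}`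
because the quadratic is nonnegative at `b = s_{j+1}`, and since it increases with `a` this
reduces to `a = s_{j-1}`, a trigonometric inequality valid as long as `sin(jπ/m) ≤ 21/40`.
Hence `Θ = 21/20`.
-/

open MeasureTheory Real Set

noncomputable section

/-- The open annular sector `{r e^{iθ} : r_j < r < r_{j+1}, |θ − (j+2ℓ)π/m| < π/m} ⊆ ℂ`. -/
def circSector (r : ℕ → ℝ) (m j l : ℕ) : Set ℂ :=
  {z : ℂ | ∃ rr θ : ℝ, r j < rr ∧ rr < r (j + 1) ∧
    |θ - ((j : ℝ) + 2 * l) * π / m| < π / m ∧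
    z = (rr : ℂ) * Complex.exp (Complex.I * (θ : ℂ))}

def sectorFactor (α : ℝ) : ℝ := 2 * sin α / (3 * α)

lemma sectorFactor_pos {α : ℝ} (h0 : 0 < α) (hπ : α < π) : 0 < sectorFactor α := by
  have := sin_pos_of_pos_of_lt_pi h0 hπ
  unfold sectorFactor
  positivity

lemma sectorFactor_lt {α : ℝ} (h0 : 0 < α) : sectorFactor α < 2 / 3 := by
  rw [sectorFactor, div_lt_iff₀ (by positivity)]
  linarith [sin_lt h0]

lemma sectorFactor_pi_div_pos {m : ℕ} (hm : 2 ≤ m) : 0 < sectorFactor (π / m) := by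
  have hm' : (2 : ℝ) ≤ m := by exact_mod_cast hm
  exact sectorFactor_pos (div_pos pi_pos (by linarith)) (div_lt_self pi_pos (by linarith))

lemma sectorFactor_pi_div_lt {m : ℕ} (hm : 1 ≤ m) : sectorFactor (π / m) < 2 / 3 := by
  have hm' : (1 : ℝ) ≤ m := by exact_mod_cast hm
  exact sectorFactor_lt (div_pos pi_pos (by linarith))

section AnnularSector

open Complex

def annularSector (a b φ α : ℝ) : Set ℂ :=
  {z : ℂ | ∃ r θ : ℝ, a < r ∧ r < b ∧ |θ - φ| < α ∧ z = (r : ℂ) * exp (I * (θ : ℂ))}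

lemma polarCoord_symm_eq_mul_exp (p : ℝ × ℝ) :
    Complex.polarCoord.symm p = (p.1 : ℂ) * exp (I * (p.2 : ℂ)) := by
  rw [Complex.polarCoord_symm_apply, mul_comm I, exp_mul_I, ← ofReal_cos, ← ofReal_sin]

lemma setIntegral_polarCoord_symm_image {E : Type*} [NormedAddCommGroup E] [NormedSpace ℝ E]
    (f : ℂ → E) {T : Set (ℝ × ℝ)} (hT : MeasurableSet T) (hTt : T ⊆ Complex.polarCoord.target) :
    ∫ z in Complex.polarCoord.symm '' T, f z = ∫ p in T, p.1 • f (Complex.polarCoord.symm p) := by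
  have hinj := Complex.polarCoord.symm.injOn
  rw [OpenPartialHomeomorph.symm_source] at hinj
  have hST : MeasurableSet (Complex.polarCoord.symm '' T) :=
    hT.image_of_continuousOn_injOn (Complex.polarCoord.continuousOn_symm.mono hTt) (hinj.mono hTt)
  calc ∫ z in Complex.polarCoord.symm '' T, f z
      = ∫ p in Complex.polarCoord.target,
          p.1 • (Complex.polarCoord.symm '' T).indicator f (Complex.polarCoord.symm p) := by
        rw [← integral_indicator hST, ← Complex.integral_comp_polarCoord_symm]
        rfl
    _ = ∫ p in Complex.polarCoord.target,
          T.indicator (fun p => p.1 • f (Complex.polarCoord.symm p)) p := by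
        refine setIntegral_congr_fun Complex.polarCoord.open_target.measurableSet fun p hp => ?_
        classical
        rw [indicator_apply, indicator_apply, hinj.mem_image_iff hTt hp]
        split_ifs <;> simp
    _ = ∫ p in T, p.1 • f (Complex.polarCoord.symm p) := by
        rw [setIntegral_indicator hT, inter_eq_self_of_subset_right hTt]

lemma annularSector_eq_image (a b φ α : ℝ) :
    annularSector a b φ α =
      rotation (Circle.exp φ) '' (Complex.polarCoord.symm '' (Ioo a b ×ˢ Ioo (-α) α)) := by
  have hrot (r θ : ℝ) : rotation (Circle.exp φ) (Complex.polarCoord.symm (r, θ - φ)) =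
      (r : ℂ) * exp (I * θ) := by
    rw [rotation_apply, Circle.coe_exp, polarCoord_symm_eq_mul_exp, mul_left_comm,
      ← Complex.exp_add]
    push_cast
    ring_nf
  ext z
  simp only [annularSector, mem_ofPred_eq, mem_image, mem_prod, mem_Ioo, Prod.exists]
  constructor
  · rintro ⟨r, θ, har, hrb, hθ, rfl⟩
    obtain ⟨h1, h2⟩ := abs_lt.1 hθ
    exact ⟨_, ⟨r, θ - φ, ⟨⟨har, hrb⟩, h1, h2⟩, rfl⟩, hrot r θ⟩
  · rintro ⟨_, ⟨r, ψ, ⟨⟨har, hrb⟩, h1, h2⟩, rfl⟩, rfl⟩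
    refine ⟨r, ψ + φ, har, hrb, by simpa [abs_lt] using ⟨h1, h2⟩, ?_⟩
    rw [← hrot, add_sub_cancel_right]

variable {a b φ α : ℝ}

lemma setIntegral_annularSector {E : Type*} [NormedAddCommGroup E] [NormedSpace ℝ E]
    (f : ℂ → E) (ha : 0 ≤ a) (hα : α ≤ π) :
    ∫ z in annularSector a b φ α, f z =
      ∫ p in Ioo a b ×ˢ Ioo (-α) α, p.1 • f (exp (I * φ) * (p.1 * exp (I * p.2))) := by
  have hT : MeasurableSet (Ioo a b ×ˢ Ioo (-α) α) := measurableSet_Ioo.prod measurableSet_Ioo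
  have hTt : Ioo a b ×ˢ Ioo (-α) α ⊆ Complex.polarCoord.target := by
    rw [Complex.polarCoord_target]
    exact prod_mono (fun r hr => ha.trans_lt hr.1)
      (Ioo_subset_Ioo (neg_le_neg hα) hα)
  rw [annularSector_eq_image, (rotation (Circle.exp φ)).measurePreserving.setIntegral_image_emb
    (rotation (Circle.exp φ)).toHomeomorph.measurableEmbedding,
    setIntegral_polarCoord_symm_image _ hT hTt]
  simp only [rotation_apply, Circle.coe_exp, polarCoord_symm_eq_mul_exp, mul_comm _ I]

lemma integral_Ioo_id (hab : a ≤ b) : ∫ r in Ioo a b, r = (b ^ 2 - a ^ 2) / 2 := by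
  rw [← integral_Ioc_eq_integral_Ioo, ← intervalIntegral.integral_of_le hab, integral_id]

lemma integral_Ioo_sq (hab : a ≤ b) :
    ∫ r in Ioo a b, (r : ℂ) ^ 2 = (((b ^ 3 - a ^ 3) / 3 : ℝ) : ℂ) := by
  rw [← integral_Ioc_eq_integral_Ioo, ← intervalIntegral.integral_of_le hab]
  simp_rw [← ofReal_pow]
  rw [intervalIntegral.integral_ofReal, integral_pow]
  norm_num

lemma integral_Ioo_exp_mul_I (hα : 0 ≤ α) :
    ∫ θ in Ioo (-α) α, exp (I * θ) = ((2 * Real.sin α : ℝ) : ℂ) := by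
  rw [← integral_Ioc_eq_integral_Ioo, ← intervalIntegral.integral_of_le (by linarith),
    integral_exp_mul_complex I_ne_zero, mul_comm I, mul_comm I, exp_mul_I, exp_mul_I]
  push_cast
  rw [Complex.cos_neg, Complex.sin_neg]
  field_simp
  ring_nf

lemma measureReal_annularSector (ha : 0 ≤ a) (hab : a ≤ b) (hα0 : 0 ≤ α) (hα : α ≤ π) :
    volume.real (annularSector a b φ α) = α * (b ^ 2 - a ^ 2) := by
  have h := setIntegral_annularSector (b := b) (φ := φ) (fun _ => (1 : ℝ)) ha hα
  rw [setIntegral_const, smul_eq_mul, mul_one] at h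
  simp_rw [h, Measure.volume_eq_prod, smul_eq_mul]
  rw [setIntegral_prod_mul (fun r : ℝ => r) (fun _ : ℝ => (1 : ℝ)), integral_Ioo_id hab,
    setIntegral_const, volume_real_Ioo_of_le (by linarith)]
  simp only [smul_eq_mul]
  ring

lemma setIntegral_annularSector_id (ha : 0 ≤ a) (hab : a ≤ b) (hα0 : 0 ≤ α) (hα : α ≤ π) :
    ∫ z in annularSector a b φ α, z =
      ((2 * Real.sin α * (b ^ 3 - a ^ 3) / 3 : ℝ) : ℂ) * exp (I * φ) := by
  have hmul (p : ℝ × ℝ) : p.1 • (exp (I * φ) * (p.1 * exp (I * p.2))) =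
      (p.1 : ℂ) ^ 2 * (exp (I * φ) * exp (I * p.2)) := by
    rw [real_smul]; ring
  rw [setIntegral_annularSector _ ha hα]
  simp_rw [hmul, Measure.volume_eq_prod]
  rw [setIntegral_prod_mul (fun r : ℝ => (r : ℂ) ^ 2) (fun θ : ℝ => exp (I * φ) * exp (I * θ)),
    integral_Ioo_sq hab, integral_const_mul, integral_Ioo_exp_mul_I hα0]
  push_cast
  ring

lemma centroid_annularSector (ha : 0 ≤ a) (hab : a < b) (hα0 : 0 < α) (hα : α ≤ π) :
    (volume (annularSector a b φ α)).toReal⁻¹ • ∫ z in annularSector a b φ α, z =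
      ((sectorFactor α * (a ^ 2 + a * b + b ^ 2) / (a + b) : ℝ) : ℂ) * exp (I * φ) := by
  rw [← measureReal_def, measureReal_annularSector ha hab.le hα0.le hα,
    setIntegral_annularSector_id ha hab.le hα0.le hα, real_smul, ← mul_assoc, ← ofReal_mul]
  have hba : b ^ 2 - a ^ 2 ≠ 0 := by nlinarith
  have hab' : a + b ≠ 0 := by linarith
  congr 2
  rw [sectorFactor]
  field_simp
  ring

end AnnularSector

lemma circSector_eq_annularSector (r : ℕ → ℝ) (m j l : ℕ) :
    circSector r m j l = annularSector (r j) (r (j + 1)) (((j : ℝ) + 2 * l) * π / m) (π / m) :=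
  rfl

def centroidDefect (c s a b : ℝ) : ℝ := c * (a ^ 2 + a * b + b ^ 2) - s * (a + b)

-- The larger root `b` of `centroidDefect c s a b = 0`.
def nextRadius (c s a : ℝ) : ℝ := (s - c * a + √((s - c * a) * (s + 3 * c * a))) / (2 * c)

section Quadratic

variable {c s a b : ℝ}

lemma centroidDefect_nextRadius (hc : 0 < c) (ha : 0 ≤ a) (hca : c * a ≤ s) :
    centroidDefect c s a (nextRadius c s a) = 0 := by
  have hsq := sq_sqrt (mul_nonneg (sub_nonneg.2 hca) (by nlinarith : 0 ≤ s + 3 * c * a))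
  unfold centroidDefect nextRadius
  generalize √((s - c * a) * (s + 3 * c * a)) = t at hsq ⊢
  field_simp
  linear_combination hsq

lemma le_nextRadius (hc : 0 < c) (hc23 : c ≤ 2 / 3) (ha : 0 ≤ a) (has : a ≤ s) :
    s ≤ nextRadius c s a := by
  have hca : c * a ≤ s := by nlinarith
  rw [nextRadius, le_div_iff₀ (by linarith), ← sub_le_iff_le_add']
  refine le_sqrt_of_sq_le ?_
  nlinarith [mul_nonneg hc.le (mul_nonneg (sub_nonneg.2 has) (by linarith : 0 ≤ 2 * a + s)),
    mul_nonneg (sub_nonneg.2 hc23) (by nlinarith : 0 ≤ a ^ 2 + a * s + s ^ 2)]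

lemma lt_nextRadius (hc : 0 < c) (hc23 : c < 2 / 3) (ha : 0 ≤ a) (has : a ≤ s) (hs : 0 < s) :
    a < nextRadius c s a := by
  have hsb := le_nextRadius hc hc23.le ha has
  have hdef := centroidDefect_nextRadius hc ha (s := s) (by nlinarith)
  refine lt_of_le_of_ne (has.trans hsb) fun hab => ?_
  have hsa : s = a := le_antisymm (hsb.trans_eq hab.symm) has
  rw [← hab, centroidDefect, hsa] at hdef
  rw [hsa] at hs
  nlinarith [mul_pos (mul_pos hs hs) (sub_pos.2 hc23)]

lemma nextRadius_le (hc : 0 < c) (ha : 0 ≤ a) (hca : c * a ≤ s) (hb : 0 < b)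
    (h : 0 ≤ centroidDefect c s a b) : nextRadius c s a ≤ b := by
  unfold centroidDefect at h
  have hs : s ≤ c * (a + b) := by nlinarith [mul_nonneg ha hb.le]
  rw [nextRadius, div_le_iff₀ (by linarith), ← le_sub_iff_add_le']
  refine sqrt_le_iff.2 ⟨by nlinarith, by nlinarith⟩

lemma centroidDefect_nonneg_of_le {p : ℝ} (hc : 0 < c) (hp : 0 ≤ p) (hpa : p ≤ a) (hb : 0 < b)
    (h : 0 ≤ centroidDefect c s p b) : 0 ≤ centroidDefect c s a b := by
  unfold centroidDefect at *
  have hs : s ≤ c * (p + b) := by nlinarith [mul_nonneg hp hb.le]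
  nlinarith [mul_nonneg (sub_nonneg.2 hpa) (by nlinarith : 0 ≤ c * (a + p + b) - s)]

end Quadratic

lemma centroidDefect_mul (c k s a b : ℝ) :
    centroidDefect c (k * s) (k * a) (k * b) = k ^ 2 * centroidDefect c s a b := by
  unfold centroidDefect; ring

lemma cube_div_four_le_sin_sub_mul_cos {α : ℝ} (h0 : 0 < α) (h1 : α ≤ 1) :
    α ^ 3 / 4 ≤ sin α - α * cos α := by
  have hsin := sin_gt_sub_cube h0
  have hcos := (abs_le.1 (cos_bound (abs_le.2 ⟨by linarith, h1⟩))).2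
  rw [abs_of_pos h0] at hcos
  have hα5 : α ^ 5 ≤ α ^ 3 := pow_le_pow_of_le_one h0.le h1 (by norm_num)
  nlinarith

lemma centroidDefect_sin_nonneg {α x : ℝ} (h0 : 0 < α) (h1 : α ≤ 1) (hx : |sin x| ≤ 21 / 40) :
    0 ≤ centroidDefect (sectorFactor α) (sin x) (sin (x - α)) (sin (x + α)) := by
  have hA : 0 < sin α := sin_pos_of_pos_of_lt_pi h0 (by linarith [pi_gt_three])
  have hA3 : sin α ^ 3 ≤ α ^ 3 := pow_le_pow_left₀ hA.le (sin_lt h0).le 3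
  have hgap := cube_div_four_le_sin_sub_mul_cos h0 h1
  have hX : sin x ^ 2 ≤ (21 / 40) ^ 2 := by
    rw [← sq_abs]; exact pow_le_pow_left₀ (abs_nonneg _) hx 2
  -- with X = sin x, A = sin α, B = cos α the claim reduces to X² (4A³ - 3(A - αB)) ≤ A³
  have hkey : sin x ^ 2 * (4 * sin α ^ 3 - 3 * (sin α - α * cos α)) ≤ sin α ^ 3 := by
    rcases le_or_gt (4 * sin α ^ 3 - 3 * (sin α - α * cos α)) 0 with hK | hK
    · nlinarith [sq_nonneg (sin x), pow_pos hA 3]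
    · nlinarith [mul_le_mul_of_nonneg_right hX hK.le]
  rw [centroidDefect, sectorFactor, sin_sub, sin_add, div_mul_eq_mul_div, sub_nonneg,
    le_div_iff₀ (by positivity)]
  have hid : 2 * sin α * ((sin x * cos α - cos x * sin α) ^ 2
      + (sin x * cos α - cos x * sin α) * (sin x * cos α + cos x * sin α)
      + (sin x * cos α + cos x * sin α) ^ 2)
      - sin x * (sin x * cos α - cos x * sin α + (sin x * cos α + cos x * sin α)) * (3 * α)
      = 2 * (sin α ^ 3 - sin x ^ 2 * (4 * sin α ^ 3 - 3 * (sin α - α * cos α))) := by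
    linear_combination 6 * sin α * sin x ^ 2 * sin_sq_add_cos_sq α
      + 2 * sin α ^ 3 * sin_sq_add_cos_sq x
  linarith

def chord (ρ : ℝ) (m j : ℕ) : ℝ := 2 * ρ * sin (j * π / m)

def radii (m : ℕ) (ρ : ℝ) : ℕ → ℝ
  | 0 => 0
  | j + 1 =>
    if chord ρ m j ≤ 21 / 20 * ρ then nextRadius (sectorFactor (π / m)) (chord ρ m j) (radii m ρ j)
    else chord ρ m j

section Radii

variable {m : ℕ} {ρ : ℝ}

lemma chord_zero : chord ρ m 0 = 0 := by simp [chord]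

lemma chord_nonneg (hρ : 0 ≤ ρ) {j : ℕ} (hj : j ≤ m) : 0 ≤ chord ρ m j := by
  have hjm : (j : ℝ) / m ≤ 1 := div_le_one_of_le₀ (by exact_mod_cast hj) m.cast_nonneg
  rw [chord, mul_div_right_comm]
  exact mul_nonneg (by positivity)
    (sin_nonneg_of_nonneg_of_le_pi (by positivity) (by nlinarith [pi_pos]))

lemma chord_pos (hρ : 0 < ρ) {j : ℕ} (hj0 : 0 < j) (hjm : j < m) : 0 < chord ρ m j := by
  have hm0 : (0 : ℝ) < m := by exact_mod_cast hj0.trans hjm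
  have hj0' : (0 : ℝ) < j / m := div_pos (by exact_mod_cast hj0) hm0
  have hjm' : (j : ℝ) / m < 1 := (div_lt_one hm0).2 (by exact_mod_cast hjm)
  rw [chord, mul_div_right_comm]
  exact mul_pos (by positivity) (sin_pos_of_pos_of_lt_pi (by positivity) (by nlinarith [pi_pos]))

lemma chord_le_chord (hρ : 0 ≤ ρ) {i j : ℕ} (hij : i ≤ j) (hj : 2 * j ≤ m) :
    chord ρ m i ≤ chord ρ m j := by
  have hij' : (i : ℝ) / m ≤ j / m := by gcongr
  have hj' : (j : ℝ) / m ≤ 1 / 2 := by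
    rcases m.eq_zero_or_pos with rfl | hm
    · simp
    · rw [div_le_iff₀ (by exact_mod_cast hm)]
      have : (2 * j : ℝ) ≤ m := by exact_mod_cast hj
      linarith
  unfold chord
  rw [mul_div_right_comm, mul_div_right_comm (j : ℝ)]
  refine mul_le_mul_of_nonneg_left (sin_le_sin_of_le_of_le_pi_div_two ?_ ?_ ?_) (by positivity)
  · nlinarith [pi_pos, show (0 : ℝ) ≤ i / m by positivity]
  · nlinarith [pi_pos]
  · nlinarith [pi_pos]

lemma centroidDefect_chord_nonneg (hm : 4 ≤ m) (hρ : 0 < ρ) {j : ℕ} (hj : j + 1 ≤ m)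
    (hact : chord ρ m (j + 1) ≤ 21 / 20 * ρ) :
    0 ≤ centroidDefect (sectorFactor (π / m)) (chord ρ m (j + 1)) (chord ρ m j)
      (chord ρ m (j + 2)) := by
  have hm' : (4 : ℝ) ≤ m := by exact_mod_cast hm
  have hα0 : 0 < π / m := div_pos pi_pos (by linarith)
  have hα1 : π / m ≤ 1 := by rw [div_le_one (by linarith)]; linarith [pi_lt_four]
  have hsin : |sin (((j + 1 : ℕ) : ℝ) * π / m)| ≤ 21 / 40 := by
    have h0 := chord_nonneg hρ.le hj
    unfold chord at h0 hact
    rw [abs_of_nonneg (by nlinarith)]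
    nlinarith
  have h := centroidDefect_sin_nonneg hα0 hα1 hsin
  have e1 : ((j + 1 : ℕ) : ℝ) * π / m - π / m = (j : ℝ) * π / m := by push_cast; ring
  have e2 : ((j + 1 : ℕ) : ℝ) * π / m + π / m = ((j + 2 : ℕ) : ℝ) * π / m := by push_cast; ring
  rw [e1, e2] at h
  unfold chord
  rw [centroidDefect_mul]
  exact mul_nonneg (sq_nonneg _) h

lemma radii_one : radii m ρ 1 = 0 := by
  simp [radii, chord, nextRadius]

lemma chord_le_radii_succ (hm : 2 ≤ m) {j : ℕ} (h0 : 0 ≤ radii m ρ j)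
    (h : radii m ρ j ≤ chord ρ m j) : chord ρ m j ≤ radii m ρ (j + 1) := by
  rw [radii]
  split_ifs
  · exact le_nextRadius (sectorFactor_pi_div_pos hm) (sectorFactor_pi_div_lt (by omega)).le h0 h
  · exact le_rfl

lemma radii_succ_succ_le_chord (hm : 4 ≤ m) (hρ : 0 < ρ) {j : ℕ} (hj : j + 2 ≤ m / 2)
    (hlow : chord ρ m j ≤ radii m ρ (j + 1)) (hup : radii m ρ (j + 1) ≤ chord ρ m (j + 1)) :
    radii m ρ (j + 2) ≤ chord ρ m (j + 2) := by
  have hc := sectorFactor_pi_div_pos (m := m) (by omega)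
  have hc23 := sectorFactor_pi_div_lt (m := m) (by omega)
  have hs0 : 0 ≤ chord ρ m j := chord_nonneg hρ.le (by omega)
  have hr0 : 0 ≤ radii m ρ (j + 1) := hs0.trans hlow
  have hs2 : 0 < chord ρ m (j + 2) := chord_pos hρ (by omega) (by omega)
  rw [radii]
  split_ifs with hact
  · refine nextRadius_le hc hr0 (by nlinarith) hs2 ?_
    exact centroidDefect_nonneg_of_le hc hs0 hlow hs2
      (centroidDefect_chord_nonneg hm hρ (by omega) hact)
  · exact chord_le_chord hρ.le (by omega) (by omega)

lemma radii_succ_mem_Icc (hm : 4 ≤ m) (hρ : 0 < ρ) {j : ℕ} (hj : j + 1 ≤ m / 2) :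
    radii m ρ (j + 1) ∈ Icc (chord ρ m j) (chord ρ m (j + 1)) := by
  induction j with
  | zero => simpa [radii_one, chord_zero] using chord_nonneg hρ.le (by omega : 1 ≤ m)
  | succ j ih =>
    obtain ⟨hlow, hup⟩ := ih (by omega)
    exact ⟨chord_le_radii_succ (by omega) ((chord_nonneg hρ.le (by omega)).trans hlow) hup,
      radii_succ_succ_le_chord hm hρ hj hlow hup⟩

lemma radii_le_chord_le_radii_succ (hm : 4 ≤ m) (hρ : 0 < ρ) {j : ℕ} (hj1 : 1 ≤ j)
    (hj : j ≤ m / 2) : radii m ρ j ≤ chord ρ m j ∧ chord ρ m j ≤ radii m ρ (j + 1) := by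
  obtain ⟨k, rfl⟩ : ∃ k, j = k + 1 := ⟨j - 1, by omega⟩
  obtain ⟨hlow, hup⟩ := radii_succ_mem_Icc hm hρ hj
  exact ⟨hup, chord_le_radii_succ (by omega) ((chord_nonneg hρ.le (by omega)).trans hlow) hup⟩

lemma radii_le_radii_succ (hm : 4 ≤ m) (hρ : 0 < ρ) {j : ℕ} (hj : j ≤ m / 2) :
    radii m ρ j ≤ radii m ρ (j + 1) := by
  rcases j.eq_zero_or_pos with rfl | hj1
  · rw [zero_add, radii_one]
    exact le_rfl
  · obtain ⟨h1, h2⟩ := radii_le_chord_le_radii_succ hm hρ hj1 hj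
    exact h1.trans h2

lemma centroid_circSector_radii (hm : 4 ≤ m) (hρ : 0 < ρ) {j : ℕ} (hj1 : 1 ≤ j) (hj : j ≤ m / 2)
    (l : ℕ) (hact : chord ρ m j ≤ 21 / 20 * ρ) :
    (volume (circSector (radii m ρ) m j l)).toReal⁻¹ • (∫ z in circSector (radii m ρ) m j l, z) =
      (chord ρ m j : ℂ) * Complex.exp (Complex.I * ((((j : ℝ) + 2 * l) * π / m : ℝ) : ℂ)) := by
  have hm' : (4 : ℝ) ≤ m := by exact_mod_cast hm
  have hc := sectorFactor_pi_div_pos (m := m) (by omega)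
  have hc23 := sectorFactor_pi_div_lt (m := m) (by omega)
  obtain ⟨k, rfl⟩ : ∃ k, j = k + 1 := ⟨j - 1, by omega⟩
  obtain ⟨hlow, hup⟩ := radii_succ_mem_Icc hm hρ hj
  have hr0 : 0 ≤ radii m ρ (k + 1) := (chord_nonneg hρ.le (by omega)).trans hlow
  have hs : 0 < chord ρ m (k + 1) := chord_pos hρ (by omega) (by omega)
  have hnext : radii m ρ (k + 1 + 1) =
      nextRadius (sectorFactor (π / m)) (chord ρ m (k + 1)) (radii m ρ (k + 1)) := by
    rw [radii, if_pos hact]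
  have hab := lt_nextRadius hc hc23 hr0 hup hs
  have hdef := centroidDefect_nextRadius hc hr0 (s := chord ρ m (k + 1)) (by nlinarith)
  rw [← hnext] at hab hdef
  rw [circSector_eq_annularSector, centroid_annularSector hr0 hab (div_pos pi_pos (by linarith))
    (div_le_self pi_pos.le (by linarith))]
  congr 2
  rw [div_eq_iff (by linarith)]
  unfold centroidDefect at hdef
  linarith

end Radii

/-- **Existence of centroid-respecting radii for the circular covering.** -/
theorem circular_radii_exist :
    ∃ Θ : ℝ, 1 < Θ ∧
      ∀ m : ℕ, Even m → 6 ≤ m → ∀ ρ : ℝ, 0 < ρ →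
        ∃ r : ℕ → ℝ,
          r 0 = 0 ∧
          (∀ j : ℕ, j + 1 ≤ m / 2 + 1 → r j ≤ r (j + 1)) ∧
          (∀ j : ℕ, 1 ≤ j → j ≤ m / 2 →
            r j ≤ 2 * ρ * Real.sin ((j : ℝ) * π / m) ∧
            2 * ρ * Real.sin ((j : ℝ) * π / m) ≤ r (j + 1)) ∧
          (∀ j : ℕ, 1 ≤ j → j ≤ m / 2 → ∀ l : ℕ, 1 ≤ l → l ≤ m →
            2 * ρ * Real.sin ((j : ℝ) * π / m) ≤ Θ * ρ →
            (volume (circSector r m j l)).toReal⁻¹ • (∫ z in circSector r m j l, z) =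
              ((2 * ρ * Real.sin ((j : ℝ) * π / m) : ℝ) : ℂ) *
                Complex.exp (Complex.I * ((((j : ℝ) + 2 * l) * π / m : ℝ) : ℂ))) := by
  refine ⟨21 / 20, by norm_num, fun m _ hm ρ hρ => ⟨radii m ρ, rfl, ?_, ?_, ?_⟩⟩
  · exact fun j hj => radii_le_radii_succ (by omega) hρ (by omega)
  · exact fun j hj1 hj => radii_le_chord_le_radii_succ (by omega) hρ hj1 hj
  · exact fun j hj1 hj l _ _ hact => centroid_circSector_radii (by omega) hρ hj1 hj l hact
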